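/- arXiv:1301.0495 — 5 statements merged into one kernel-verified Lean document; each statement's English description precedes it below -/
import Mathlib

section
/- Let u ∈ ℂ³ be a unit vector (∑ᵢ |uᵢ|² = 1), let S = 2uu† − 𝟙 be the associated 3×3 matrix (Sᵢⱼ = 2 uᵢ (conj uⱼ) − δᵢⱼ), and let M be a symmetric 3×3 complex matrix (Mᵀ = M) satisfying Sᵀ M S = M. Then M u is proportional to the componentwise complex conjugate of u, i.e. there exists c ∈ ℂ with (M u)ᵢ = c · conj(uᵢ) for all i. -/
/-!
`S` fixes `u`, so `Sᵀ M S = M` applied to `u` gives `Sᵀ (M u) = M u`. Since `Sᵀ = 2 ū uᵀ − 𝟙`,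
a vector `v` is fixed by `Sᵀ` exactly when `v = (uᵀ v) ū`.
-/

open Matrix

variable {ι K : Type*} [Fintype ι] [DecidableEq ι]

def reflection [Ring K] [StarRing K] (u : ι → K) : Matrix ι ι K :=
  (2 : K) • vecMulVec u (star u) - 1

theorem reflection_mulVec_self [CommRing K] [StarRing K] {u : ι → K} (hu : star u ⬝ᵥ u = 1) :
    reflection u *ᵥ u = u := by
  rw [reflection, sub_mulVec, one_mulVec, smul_mulVec, vecMulVec_mulVec, hu, MulOpposite.op_one,
    one_smul, two_smul, add_sub_cancel_right]

theorem eq_smul_star_of_reflection_transpose_mulVec_eq [Field K] [StarRing K] [NeZero (2 : K)]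
    {u v : ι → K} (hv : (reflection u)ᵀ *ᵥ v = v) : v = (u ⬝ᵥ v) • star u := by
  rw [reflection, transpose_sub, transpose_smul, transpose_one, transpose_vecMulVec, sub_mulVec,
    one_mulVec, smul_mulVec, vecMulVec_mulVec, op_smul_eq_smul, sub_eq_iff_eq_add,
    ← two_smul K v] at hv
  exact (smul_right_injective _ two_ne_zero hv).symm

theorem stmt0_general (u : Fin 3 → ℂ) (hu : ∑ i, Complex.normSq (u i) = 1)
    (S : Matrix (Fin 3) (Fin 3) ℂ)
    (hS : S = Matrix.of (fun i j => 2 * u i * (starRingEnd ℂ) (u j)) - 1)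
    (M : Matrix (Fin 3) (Fin 3) ℂ)
    (hinv : Sᵀ * M * S = M) :
    ∃ c : ℂ, ∀ i, M.mulVec u i = c * (starRingEnd ℂ) (u i) := by
  have hunit : star u ⬝ᵥ u = 1 := by
    simpa [dotProduct, ← Complex.normSq_eq_conj_mul_self] using congrArg ((↑) : ℝ → ℂ) hu
  have hS_eq : S = reflection u := by
    rw [hS, reflection]; ext i j; simp [vecMulVec_apply, mul_assoc]
  have hSu : S *ᵥ u = u := hS_eq ▸ reflection_mulVec_self hunit
  have hSMu : Sᵀ *ᵥ (M *ᵥ u) = M *ᵥ u := by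
    conv_rhs => rw [← hinv, ← mulVec_mulVec, hSu, ← mulVec_mulVec]
  rw [hS_eq] at hSMu
  exact ⟨u ⬝ᵥ M *ᵥ u, congrFun (eq_smul_star_of_reflection_transpose_mulVec_eq hSMu)⟩

/-- If `u ∈ ℂ³` is a unit vector, `S = 2uu† − 𝟙`, and `M` is a
symmetric matrix with `Sᵀ M S = M`, then `M u` is proportional to `conj u`. -/
theorem stmt0 (u : Fin 3 → ℂ) (hu : ∑ i, Complex.normSq (u i) = 1)
    (S : Matrix (Fin 3) (Fin 3) ℂ)
    (hS : S = Matrix.of (fun i j => 2 * u i * (starRingEnd ℂ) (u j)) - 1)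
    (M : Matrix (Fin 3) (Fin 3) ℂ) (hM : Mᵀ = M)
    (hinv : Sᵀ * M * S = M) :
    ∃ c : ℂ, ∀ i, M.mulVec u i = c * (starRingEnd ℂ) (u i) :=
  stmt0_general u hu S hS M hinv
end

section
/- Let M̃ be a symmetric 3×3 complex matrix, U a 3×3 unitary matrix, and m₁, m₂, m₃ nonnegative real numbers that are pairwise distinct, such that Uᵀ M̃ U = diag(m₁, m₂, m₃). Let ũ ∈ ℂ³ be a unit vector and set S̃ = 2ũũ† − 𝟙. If S̃ᵀ M̃ S̃ = M̃, then ũ coincides, up to a phase, with one of the columns of U: there exist an index j ∈ {1,2,3} and θ ∈ ℂ with |θ| = 1 such that ũ = θ • uⱼ, where uⱼ is the j-th column of U. -/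
/-!
As `S̃` is Hermitian with `S̃² = 𝟙`, the hypothesis `S̃ᵀ M̃ S̃ = M̃` gives `S̃ᵀ M̃ = M̃ S̃`, and
taking adjoints `M̃† S̃ᵀ = S̃ M̃†`; hence `S̃` commutes with `M̃† M̃`. In the basis of the columns
of `U`, `M̃† M̃` becomes `diag(m₁², m₂², m₃²)`, whose entries are distinct because `mⱼ ≥ 0`, so
`U† S̃ U = 2vv† − 𝟙` with `v = U†ũ` is diagonal. Its off-diagonal entries `2 vᵢ conj(vⱼ)` vanish,
so the unit vector `v` is a phase times a coordinate vector, and `ũ = U v` a phase times a column.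
-/

open Matrix

namespace Matrix

variable {n R : Type*}

theorem isDiag_of_commute_diagonal [Fintype n] [DecidableEq n] [CommRing R] [NoZeroDivisors R]
    {d : n → R} (hd : Function.Injective d) {A : Matrix n n R} (h : Commute (diagonal d) A) :
    A.IsDiag := by
  intro i j hij
  have hij' := congr_fun₂ h.eq i j
  rw [diagonal_mul, mul_diagonal] at hij'
  have : (d i - d j) * A i j = 0 := by linear_combination hij'
  exact (mul_eq_zero.mp this).resolve_left (sub_ne_zero.mpr (hd.ne hij))

section StarRing

variable [DecidableEq n] [CommRing R] [StarRing R]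

def lineReflection (u : n → R) : Matrix n n R := (2 : R) • vecMulVec u (star u) - 1

theorem lineReflection_conjTranspose (u : n → R) : (lineReflection u)ᴴ = lineReflection u := by
  simp [lineReflection, conjTranspose_sub, conjTranspose_smul]

theorem lineReflection_apply_of_ne (u : n → R) {i j : n} (hij : i ≠ j) :
    lineReflection u i j = 2 * (u i * star (u j)) := by
  simp [lineReflection, one_apply_ne hij, vecMulVec_apply]

variable [Fintype n]

theorem lineReflection_mul_self {u : n → R} (hu : star u ⬝ᵥ u = 1) :
    lineReflection u * lineReflection u = 1 := by
  have hP : vecMulVec u (star u) * vecMulVec u (star u) = vecMulVec u (star u) := by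
    rw [vecMulVec_mul_vecMulVec, hu, one_smul]
  simp only [lineReflection, sub_mul, mul_sub, Matrix.smul_mul, Matrix.mul_smul, hP,
    Matrix.mul_one, Matrix.one_mul, smul_smul]
  module

theorem conjTranspose_mul_lineReflection_mul {U : Matrix n n R} (hU : U ∈ unitaryGroup n R)
    (u : n → R) : Uᴴ * lineReflection u * U = lineReflection (Uᴴ *ᵥ u) := by
  have hUU : Uᴴ * U = 1 := mem_unitaryGroup_iff'.mp hU
  rw [lineReflection, lineReflection, Matrix.mul_sub, Matrix.sub_mul, Matrix.mul_smul,
    Matrix.smul_mul, mul_vecMulVec, vecMulVec_mul, Matrix.mul_one, hUU, star_mulVec,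
    conjTranspose_conjTranspose]

theorem star_dotProduct_self_conjTranspose_mulVec {U : Matrix n n R}
    (hU : U ∈ unitaryGroup n R) (u : n → R) :
    star (Uᴴ *ᵥ u) ⬝ᵥ (Uᴴ *ᵥ u) = star u ⬝ᵥ u := by
  have hUU : U * Uᴴ = 1 := mem_unitaryGroup_iff.mp hU
  rw [star_mulVec, conjTranspose_conjTranspose, dotProduct_mulVec, vecMul_vecMul, hUU,
    vecMul_one]

theorem Commute.conjTranspose_mul_mul_of_mem_unitaryGroup {A B U : Matrix n n R}
    (hU : U ∈ unitaryGroup n R) (h : Commute A B) : Commute (Uᴴ * A * U) (Uᴴ * B * U) := by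
  have hUU : U * Uᴴ = 1 := mem_unitaryGroup_iff.mp hU
  calc Uᴴ * A * U * (Uᴴ * B * U) = Uᴴ * (A * B) * U := by
        simp only [Matrix.mul_assoc, ← Matrix.mul_assoc U, hUU, Matrix.one_mul]
    _ = Uᴴ * (B * A) * U := by rw [h.eq]
    _ = Uᴴ * B * U * (Uᴴ * A * U) := by
        simp only [Matrix.mul_assoc, ← Matrix.mul_assoc U, hUU, Matrix.one_mul]

theorem conjTranspose_mul_conjTranspose_mul_self_mul {U : Matrix n n R}
    (hU : U ∈ unitaryGroup n R) (M : Matrix n n R) :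
    Uᴴ * (Mᴴ * M) * U = (Uᵀ * M * U)ᴴ * (Uᵀ * M * U) := by
  have hUt : Uᵀᴴ * Uᵀ = 1 := mem_unitaryGroup_iff'.mp (transpose_mem_unitaryGroup_iff.mpr hU)
  simp only [conjTranspose_mul, Matrix.mul_assoc, ← Matrix.mul_assoc Uᵀᴴ, hUt, Matrix.one_mul]

theorem commute_conjTranspose_mul_self_of_transpose_mul_mul_eq {M S : Matrix n n R}
    (hSh : Sᴴ = S) (hSS : S * S = 1) (h : Sᵀ * M * S = M) : Commute (Mᴴ * M) S := by
  have hMS : Sᵀ * M = M * S := by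
    calc Sᵀ * M = Sᵀ * M * (S * S) := by rw [hSS, Matrix.mul_one]
      _ = M * S := by rw [← Matrix.mul_assoc, h]
  have hSMh : Mᴴ * Sᵀ = S * Mᴴ := by
    simpa [conjTranspose_mul, conjTranspose_transpose_eq_transpose_conjTranspose, hSh]
      using congrArg conjTranspose hMS
  calc Mᴴ * M * S = Mᴴ * (Sᵀ * M) := by rw [hMS, Matrix.mul_assoc]
    _ = S * (Mᴴ * M) := by rw [← Matrix.mul_assoc, hSMh, Matrix.mul_assoc]

theorem exists_eq_single_of_isDiag_lineReflection [IsDomain R] [NeZero (2 : R)] {v : n → R}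
    (hv : star v ⬝ᵥ v = 1) (h : (lineReflection v).IsDiag) :
    ∃ j, v = Pi.single j (v j) ∧ v j ∈ unitary R := by
  obtain ⟨j, hj⟩ : ∃ j, v j ≠ 0 := by
    by_contra! hzero
    simp [dotProduct, hzero] at hv
  have hsingle : v = Pi.single j (v j) := by
    ext i
    rcases eq_or_ne i j with rfl | hij
    · simp
    · have hvij : lineReflection v i j = 0 := h hij
      rw [lineReflection_apply_of_ne v hij] at hvij
      simpa [Pi.single_apply, hij, hj, two_ne_zero] using hvij
  refine ⟨j, hsingle, Unitary.mem_iff_star_mul_self.mpr ?_⟩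
  rw [hsingle] at hv
  simpa using hv

end StarRing

theorem star_dotProduct_self_eq_sum_normSq [Fintype n] (u : n → ℂ) :
    star u ⬝ᵥ u = ∑ i, (Complex.normSq (u i) : ℂ) := by
  simp [dotProduct, Complex.normSq_eq_conj_mul_self]

theorem conjTranspose_diagonal_ofReal_mul_self [Fintype n] [DecidableEq n] (m : n → ℝ) :
    (diagonal fun i => (m i : ℂ))ᴴ * diagonal (fun i => (m i : ℂ)) =
      diagonal fun i => (m i : ℂ) ^ 2 := by
  rw [diagonal_conjTranspose, diagonal_mul_diagonal]
  simp [sq]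

end Matrix

theorem stmt2_general (M : Matrix (Fin 3) (Fin 3) ℂ)
    (U : Matrix (Fin 3) (Fin 3) ℂ) (hU : U ∈ Matrix.unitaryGroup (Fin 3) ℂ)
    (m : Fin 3 → ℝ) (hm0 : ∀ i, 0 ≤ m i) (hmd : Function.Injective m)
    (hdiag : Uᵀ * M * U = Matrix.diagonal fun i => (m i : ℂ))
    (u : Fin 3 → ℂ) (hu : ∑ i, Complex.normSq (u i) = 1)
    (S : Matrix (Fin 3) (Fin 3) ℂ)
    (hS : S = Matrix.of (fun i j => 2 * u i * (starRingEnd ℂ) (u j)) - 1)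
    (hinv : Sᵀ * M * S = M) :
    ∃ (j : Fin 3) (θ : ℂ), ‖θ‖ = 1 ∧ u = θ • (fun i => U i j) := by
  have hu1 : star u ⬝ᵥ u = 1 := by
    rw [star_dotProduct_self_eq_sum_normSq]
    exact_mod_cast hu
  have hSu : S = lineReflection u := by
    ext i j
    simp [hS, lineReflection, vecMulVec_apply, mul_assoc]
  rw [hSu] at hinv
  have hsq : Function.Injective fun i => (m i : ℂ) ^ 2 := by
    intro i j hij
    simp only at hij
    exact hmd ((sq_eq_sq₀ (hm0 i) (hm0 j)).mp (by exact_mod_cast hij))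
  have hcomm : Commute (diagonal fun i => (m i : ℂ) ^ 2) (lineReflection (Uᴴ *ᵥ u)) := by
    have := (commute_conjTranspose_mul_self_of_transpose_mul_mul_eq
      (lineReflection_conjTranspose u) (lineReflection_mul_self hu1)
      hinv).conjTranspose_mul_mul_of_mem_unitaryGroup hU
    rwa [conjTranspose_mul_conjTranspose_mul_self_mul hU, hdiag,
      conjTranspose_diagonal_ofReal_mul_self, conjTranspose_mul_lineReflection_mul hU] at this
  obtain ⟨j, hv, hθ⟩ := exists_eq_single_of_isDiag_lineReflection
    ((star_dotProduct_self_conjTranspose_mulVec hU u).trans hu1)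
    (isDiag_of_commute_diagonal hsq hcomm)
  refine ⟨j, (Uᴴ *ᵥ u) j, CStarRing.norm_of_mem_unitary hθ, ?_⟩
  have hUU : U * Uᴴ = 1 := mem_unitaryGroup_iff.mp hU
  calc u = U *ᵥ (Uᴴ *ᵥ u) := by rw [mulVec_mulVec, hUU, one_mulVec]
    _ = _ := by rw [hv]; ext i; simp [mul_comm]

/-- If the unitary `U` diagonalizes the symmetric matrix `M̃` as
`Uᵀ M̃ U = diag(m₁,m₂,m₃)` with the `mⱼ ≥ 0` pairwise distinct, and if
`S̃ = 2ũũ† − 𝟙` (for a unit vector `ũ`) satisfies `S̃ᵀ M̃ S̃ = M̃`, then `ũ` is,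
up to a phase, one of the columns of `U`. -/
theorem stmt2 (M : Matrix (Fin 3) (Fin 3) ℂ) (hM : Mᵀ = M)
    (U : Matrix (Fin 3) (Fin 3) ℂ) (hU : U ∈ Matrix.unitaryGroup (Fin 3) ℂ)
    (m : Fin 3 → ℝ) (hm0 : ∀ i, 0 ≤ m i) (hmd : Function.Injective m)
    (hdiag : Uᵀ * M * U = Matrix.diagonal fun i => (m i : ℂ))
    (u : Fin 3 → ℂ) (hu : ∑ i, Complex.normSq (u i) = 1)
    (S : Matrix (Fin 3) (Fin 3) ℂ)
    (hS : S = Matrix.of (fun i j => 2 * u i * (starRingEnd ℂ) (u j)) - 1)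
    (hinv : Sᵀ * M * S = M) :
    ∃ (j : Fin 3) (θ : ℂ), ‖θ‖ = 1 ∧ u = θ • (fun i => U i j) :=
  stmt2_general M U hU m hm0 hmd hdiag u hu S hS hinv
end

section
/- Let M be a 3×3 unitary matrix over ℂ. Then the coefficient of λ in its characteristic polynomial λ³ − M₂λ² + M₁λ − M₀ satisfies M₁ = conj(Tr M) · det M, i.e. charpoly(M).coeff 1 = conj(trace M) · det M. -/
/-!
For an invertible matrix `A`, `charpoly A` is `(-1)ⁿ det A` times the reversed characteristic
polynomial of `A⁻¹`, whose linear coefficient is `-tr A⁻¹`. For a unitary matrix `A⁻¹ = Aᴴ`, so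
`tr A⁻¹ = conj (tr A)`; in dimension 3 the sign `(-1)ⁿ⁺¹` is `1`.
-/

open Matrix Polynomial

namespace Matrix

variable {n R : Type*} [Fintype n] [DecidableEq n] [CommRing R]

theorem charpoly_coeff_one_of_isUnit {A : Matrix n n R} (hA : IsUnit A) :
    A.charpoly.coeff 1 = (-1) ^ (Fintype.card n + 1) * A.det * trace A⁻¹ := by
  have hdet : IsUnit A.det := (isUnit_iff_isUnit_det A).mp hA
  have h := charpoly_inv A⁻¹ ((isUnit_iff_isUnit_det _).mpr (isUnit_nonsing_inv_det_iff.mpr hdet))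
  rw [nonsing_inv_nonsing_inv A hdet, det_nonsing_inv, Ring.inverse_inverse hdet] at h
  rw [h, ← C_1, ← C_neg, ← C_pow, ← C_mul, coeff_C_mul, coeff_charpolyRev_eq_neg_trace]
  ring

theorem charpoly_coeff_one_of_mem_unitaryGroup [StarRing R] {U : Matrix n n R}
    (hU : U ∈ unitaryGroup n R) :
    U.charpoly.coeff 1 = (-1) ^ (Fintype.card n + 1) * star (trace U) * U.det := by
  have hU' : U * star U = 1 := mem_unitaryGroup_iff.mp hU
  rw [charpoly_coeff_one_of_isUnit (IsUnit.of_mul_eq_one _ hU'), inv_eq_right_inv hU',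
    star_eq_conjTranspose, trace_conjTranspose]
  ring

end Matrix

/-- For a 3×3 unitary matrix `M`, the coefficient of `λ` in the
characteristic polynomial satisfies `M₁ = conj(Tr M) · det M`. -/
theorem stmt3 (M : Matrix.unitaryGroup (Fin 3) ℂ) :
    (Matrix.charpoly (M : Matrix (Fin 3) (Fin 3) ℂ)).coeff 1 =
      (starRingEnd ℂ) (Matrix.trace (M : Matrix (Fin 3) (Fin 3) ℂ)) *
        Matrix.det (M : Matrix (Fin 3) (Fin 3) ℂ) := by
  rw [charpoly_coeff_one_of_mem_unitaryGroup M.2, Fintype.card_fin, starRingEnd_apply]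
  ring
end

section
/- Let M be a 3×3 unitary matrix over ℂ and let λ₁, λ₂, λ₃ ∈ ℂ satisfy |λ₁| = |λ₂| = |λ₃| = 1. Then the characteristic polynomial of M equals (X − λ₁)(X − λ₂)(X − λ₃) if and only if both Tr M = λ₁ + λ₂ + λ₃ and det M = λ₁ λ₂ λ₃. -/
/-!
On the unit circle `conj z = z⁻¹`, so for `‖a‖ = ‖b‖ = ‖c‖ = 1` the second elementary symmetric
function satisfies `ab + ac + bc = abc · conj (a + b + c)`. Hence a monic cubic with all roots on
the circle is determined by the sum and the product of its roots. The eigenvalues of a unitary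
matrix lie on the circle, and their sum and product are its trace and determinant.
-/

open Matrix Polynomial

open ComplexConjugate

theorem Complex.mul_add_mul_add_mul_eq_of_norm_eq_one {a b c : ℂ}
    (ha : ‖a‖ = 1) (hb : ‖b‖ = 1) (hc : ‖c‖ = 1) :
    a * b + a * c + b * c = a * b * c * conj (a + b + c) := by
  have ha0 : a ≠ 0 := norm_ne_zero_iff.mp (by simp [ha])
  have hb0 : b ≠ 0 := norm_ne_zero_iff.mp (by simp [hb])
  have hc0 : c ≠ 0 := norm_ne_zero_iff.mp (by simp [hc])
  rw [map_add, map_add, ← Complex.inv_eq_conj ha, ← Complex.inv_eq_conj hb,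
    ← Complex.inv_eq_conj hc]
  field_simp
  ring

theorem Polynomial.X_sub_C_mul_X_sub_C_mul_X_sub_C {R : Type*} [CommRing R] (a b c : R) :
    (X - C a) * (X - C b) * (X - C c) =
      X ^ 3 - C (a + b + c) * X ^ 2 + C (a * b + a * c + b * c) * X - C (a * b * c) := by
  simp only [map_add, map_mul]
  ring

theorem Complex.X_sub_C_mul_X_sub_C_mul_X_sub_C_eq_iff_of_norm_eq_one {a b c a' b' c' : ℂ}
    (ha : ‖a‖ = 1) (hb : ‖b‖ = 1) (hc : ‖c‖ = 1)
    (ha' : ‖a'‖ = 1) (hb' : ‖b'‖ = 1) (hc' : ‖c'‖ = 1) :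
    (X - C a) * (X - C b) * (X - C c) = (X - C a') * (X - C b') * (X - C c') ↔
      a + b + c = a' + b' + c' ∧ a * b * c = a' * b' * c' := by
  simp only [X_sub_C_mul_X_sub_C_mul_X_sub_C]
  constructor
  · intro h
    have h2 := congrArg (coeff · 2) h
    have h0 := congrArg (coeff · 0) h
    simp only [coeff_sub, coeff_add, coeff_C_mul, coeff_X_pow, coeff_X, coeff_C] at h2 h0
    norm_num at h2 h0
    exact ⟨by linear_combination -h2, h0⟩
  · rintro ⟨hsum, hprod⟩
    rw [mul_add_mul_add_mul_eq_of_norm_eq_one ha hb hc,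
      mul_add_mul_add_mul_eq_of_norm_eq_one ha' hb' hc', hsum, hprod]

open scoped Matrix.Norms.L2Operator in
theorem Matrix.norm_eq_one_of_isRoot_charpoly {n : Type*} [Fintype n] [DecidableEq n]
    {U : Matrix n n ℂ} (hU : U ∈ unitaryGroup n ℂ) {μ : ℂ} (hμ : U.charpoly.IsRoot μ) :
    ‖μ‖ = 1 :=
  spectrum.norm_eq_one_of_unitary hU (mem_spectrum_of_isRoot_charpoly hμ)

theorem Matrix.exists_charpoly_eq_X_sub_C_mul_X_sub_C_mul_X_sub_C {K : Type*} [Field K]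
    [IsAlgClosed K] (A : Matrix (Fin 3) (Fin 3) K) :
    ∃ a b c, A.charpoly = (X - C a) * (X - C b) * (X - C c) ∧
      A.trace = a + b + c ∧ A.det = a * b * c := by
  have hsplit : A.charpoly.Splits := IsAlgClosed.splits _
  obtain ⟨a, b, c, hroots⟩ : ∃ a b c, A.charpoly.roots = {a, b, c} := by
    refine Multiset.card_eq_three.mp ?_
    rw [splits_iff_card_roots.mp hsplit, charpoly_natDegree_eq_dim, Fintype.card_fin]
  refine ⟨a, b, c, ?_, ?_, ?_⟩
  · rw [hsplit.eq_prod_roots_of_monic A.charpoly_monic, hroots]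
    simp [mul_assoc]
  · rw [trace_eq_sum_roots_charpoly_of_splits hsplit, hroots]
    simp [add_assoc]
  · rw [det_eq_prod_roots_charpoly_of_splits hsplit, hroots]
    simp [mul_assoc]

/-- A 3×3 unitary matrix `M` has eigenvalues `λ₁, λ₂, λ₃` (all of
modulus one, with multiplicity) if and only if `Tr M = λ₁+λ₂+λ₃` and
`det M = λ₁λ₂λ₃`. -/
theorem stmt4 (M : Matrix.unitaryGroup (Fin 3) ℂ) (l1 l2 l3 : ℂ)
    (h1 : ‖l1‖ = 1) (h2 : ‖l2‖ = 1) (h3 : ‖l3‖ = 1) :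
    Matrix.charpoly (M : Matrix (Fin 3) (Fin 3) ℂ) =
        (X - C l1) * (X - C l2) * (X - C l3) ↔
      Matrix.trace (M : Matrix (Fin 3) (Fin 3) ℂ) = l1 + l2 + l3 ∧
        Matrix.det (M : Matrix (Fin 3) (Fin 3) ℂ) = l1 * l2 * l3 := by
  obtain ⟨a, b, c, hchar, htr, hdet⟩ :=
    exists_charpoly_eq_X_sub_C_mul_X_sub_C_mul_X_sub_C (M : Matrix (Fin 3) (Fin 3) ℂ)
  have hroot {μ : ℂ} (hμ : μ = a ∨ μ = b ∨ μ = c) : ‖μ‖ = 1 :=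
    norm_eq_one_of_isRoot_charpoly M.2 <| by
      rcases hμ with rfl | rfl | rfl <;> simp [hchar]
  rw [hchar, htr, hdet, Complex.X_sub_C_mul_X_sub_C_mul_X_sub_C_eq_iff_of_norm_eq_one
    (hroot (.inl rfl)) (hroot (.inr (.inl rfl))) (hroot (.inr (.inr rfl))) h1 h2 h3]
end

section
/- Let E = [[0,1,0],[0,0,1],[1,0,0]], S₁ = diag(1,−1,−1) and B = [[−1,0,0],[0,0,−1],[0,−1,0]]. Then the subgroup of the 3×3 unitary group over ℂ generated by {E, S₁, B} is isomorphic as a group to the symmetric group S₄ on four letters (in particular it has exactly 24 elements). -/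
/-!
`S₄` permutes the coordinates of `ℂ⁴` and preserves the hyperplane `∑ xᵢ = 0`, which has the
orthogonal basis `v₁, v₂, v₃` of `±1`-vectors attached to the three ways of splitting
`{0, 1, 2, 3}` into two pairs; each permutation maps every `vₖ` to some `±vₗ`. Twisting this
representation by the sign gives a homomorphism `ρ` from `S₄` to the signed permutation matrices
(the rotation group of the cube), characterised by `V ρ(σ) = sgn σ • P_σ V`, where `V` has columns
`vₖ`; the identity holds because `V Vᵀ = 4 - J` (`J` the all-ones matrix) commutes with `P_σ` and
`Vᵀ V = 4`. This `ρ` is faithful and unitary, and `ρ (1 3 2) = E`, `ρ ((0 1)(2 3)) = S₁`,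
`ρ (2 3) = B`. These three permutations generate `S₄`, so the group generated by `E`, `S₁`, `B` is
the image of `ρ`, isomorphic to `S₄`.
-/

/-- `E` is the cyclic permutation matrix. -/
def E : Matrix (Fin 3) (Fin 3) ℂ := !![0, 1, 0; 0, 0, 1; 1, 0, 0]

/-- `S₁ = diag(1, −1, −1)`. -/
def S₁ : Matrix (Fin 3) (Fin 3) ℂ := !![1, 0, 0; 0, -1, 0; 0, 0, -1]

/-- `B = [[−1,0,0],[0,0,−1],[0,−1,0]]`. -/
def B : Matrix (Fin 3) (Fin 3) ℂ := !![-1, 0, 0; 0, 0, -1; 0, -1, 0]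

open Equiv Matrix

section PermMatrix

variable {m n R : Type*} [Fintype m] [DecidableEq m] [NonAssocSemiring R]

lemma permMatrixHom_mul (σ : Perm m) (M : Matrix m n R) :
    permMatrixHom (R := R) σ * M = M.submatrix σ.symm id :=
  PEquiv.toMatrix_toPEquiv_mul _ _

lemma mul_permMatrixHom (σ : Perm m) (M : Matrix n m R) :
    M * permMatrixHom (R := R) σ = M.submatrix id σ :=
  PEquiv.mul_toMatrix_toPEquiv _ _

lemma conjTranspose_permMatrixHom [StarRing R] (σ : Perm m) :
    (permMatrixHom (R := R) σ)ᴴ = permMatrixHom σ⁻¹ :=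
  conjTranspose_permMatrix _

lemma permMatrixHom_mul_comm {σ : Perm m} {M : Matrix m m R}
    (hM : ∀ i j, M (σ i) (σ j) = M i j) :
    permMatrixHom (R := R) σ * M = M * permMatrixHom σ := by
  ext i j
  rw [permMatrixHom_mul, mul_permMatrixHom, submatrix_apply, submatrix_apply, id, id, ← hM,
    apply_symm_apply]

end PermMatrix

local notation "P" => (permMatrixHom : Perm (Fin 4) →* Matrix (Fin 4) (Fin 4) ℂ)

/-- The columns are the `±1` vectors separating the pair partitions `01|23`, `02|13`, `03|12` of
`Fin 4`. -/
def V : Matrix (Fin 4) (Fin 3) ℂ := !![1, 1, 1; 1, -1, -1; -1, 1, -1; -1, -1, 1]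

lemma transpose_V_mul_V : Vᵀ * V = (4 : ℂ) • 1 := by
  ext i j
  fin_cases i <;> fin_cases j <;> norm_num [V, mul_apply, Fin.sum_univ_succ, one_apply]

lemma V_mul_transpose_V_apply (i j : Fin 4) : (V * Vᵀ) i j = if i = j then 3 else -1 := by
  fin_cases i <;> fin_cases j <;> norm_num [V, mul_apply, Fin.sum_univ_succ]

lemma map_star_V : V.map star = V := by
  ext i j
  fin_cases i <;> fin_cases j <;> simp [V]

lemma conjTranspose_V : Vᴴ = Vᵀ := by
  rw [conjTranspose, transpose_map, map_star_V]

lemma conjTranspose_transpose_V : Vᵀᴴ = V := by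
  rw [transpose_conjTranspose, map_star_V]

lemma V_mul_injective {n : Type*} : Function.Injective (V * · : Matrix (Fin 3) n ℂ → _) := by
  intro A A' h
  have h' : (4 : ℂ) • A = (4 : ℂ) • A' := by
    simpa only [← Matrix.mul_assoc, transpose_V_mul_V, smul_mul, Matrix.one_mul] using
      congrArg (Vᵀ * ·) h
  exact smul_right_injective _ (by norm_num : (4 : ℂ) ≠ 0) h'

/-- The standard representation of `S₄` in the basis `V`, twisted by the sign. -/
noncomputable def cubeRepFun (σ : Perm (Fin 4)) : Matrix (Fin 3) (Fin 3) ℂ :=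
  ((Perm.sign σ : ℤ) / 4 : ℂ) • (Vᵀ * P σ * V)

lemma V_mul_cubeRepFun (σ : Perm (Fin 4)) :
    V * cubeRepFun σ = ((Perm.sign σ : ℤ) : ℂ) • (P σ * V) := by
  have hcomm : P σ * (V * Vᵀ) = V * Vᵀ * P σ :=
    permMatrixHom_mul_comm fun i j => by simp [V_mul_transpose_V_apply]
  calc V * cubeRepFun σ = ((Perm.sign σ : ℤ) / 4 : ℂ) • (V * Vᵀ * P σ * V) := by
        simp only [cubeRepFun, Matrix.mul_smul, Matrix.mul_assoc]
    _ = ((Perm.sign σ : ℤ) / 4 : ℂ) • (P σ * V * (Vᵀ * V)) := by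
        rw [← hcomm]; simp only [Matrix.mul_assoc]
    _ = _ := by
        rw [transpose_V_mul_V, Matrix.mul_smul, Matrix.mul_one, smul_smul]
        congr 1; ring

noncomputable def cubeRep : Perm (Fin 4) →* Matrix (Fin 3) (Fin 3) ℂ where
  toFun := cubeRepFun
  map_one' := V_mul_injective <| by simp [V_mul_cubeRepFun]
  map_mul' σ τ := V_mul_injective <| by
    dsimp only
    rw [V_mul_cubeRepFun, ← Matrix.mul_assoc, V_mul_cubeRepFun, Matrix.smul_mul, Matrix.mul_assoc,
      V_mul_cubeRepFun, Matrix.mul_smul, smul_smul, map_mul, map_mul, Matrix.mul_assoc,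
      Units.val_mul, Int.cast_mul]

lemma V_mul_cubeRep (σ : Perm (Fin 4)) :
    V * cubeRep σ = ((Perm.sign σ : ℤ) : ℂ) • V.submatrix σ.symm id := by
  rw [← permMatrixHom_mul]
  exact V_mul_cubeRepFun σ

lemma conjTranspose_cubeRep (σ : Perm (Fin 4)) : (cubeRep σ)ᴴ = cubeRep σ⁻¹ := by
  simp only [cubeRep, MonoidHom.coe_mk, OneHom.coe_mk, cubeRepFun, conjTranspose_smul,
    conjTranspose_mul, conjTranspose_V, conjTranspose_transpose_V, conjTranspose_permMatrixHom,
    Matrix.mul_assoc, Perm.sign_inv]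
  simp

lemma cubeRep_mem_unitaryGroup (σ : Perm (Fin 4)) : cubeRep σ ∈ unitaryGroup (Fin 3) ℂ := by
  rw [mem_unitaryGroup_iff', star_eq_conjTranspose, conjTranspose_cubeRep, ← map_mul,
    inv_mul_cancel, map_one]

lemma cubeRep_injective : Function.Injective cubeRep := by
  rw [injective_iff_map_eq_one]
  intro σ hσ
  refine Perm.ext fun i => ?_
  have h : (V * Vᵀ) i i = ((Perm.sign σ : ℤ) : ℂ) * (V * Vᵀ) (σ.symm i) i := by
    have h := congrArg (fun M : Matrix (Fin 4) (Fin 3) ℂ => (M * Vᵀ) i i) (V_mul_cubeRep σ)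
    simp only [hσ, Matrix.mul_one, Matrix.smul_mul, Matrix.smul_apply, smul_eq_mul] at h
    exact h
  rw [V_mul_transpose_V_apply, V_mul_transpose_V_apply] at h
  -- `3 = ±3` or `3 = ±(-1)`, and only `3 = 3` is possible
  have hi : σ.symm i = i := by
    by_contra hi
    rcases Int.units_eq_one_or (Perm.sign σ) with hs | hs <;> norm_num [hs, hi] at h
  exact (σ.symm_apply_eq.mp hi).symm

noncomputable def unitaryCubeRep : Perm (Fin 4) →* unitaryGroup (Fin 3) ℂ :=
  cubeRep.codRestrict _ cubeRep_mem_unitaryGroup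

lemma unitaryCubeRep_injective : Function.Injective unitaryCubeRep :=
  fun _ _ h => cubeRep_injective (congrArg Subtype.val h)

lemma cubeRep_eq_of_V_mul {σ : Perm (Fin 4)} {A : Matrix (Fin 3) (Fin 3) ℂ}
    (h : ((Perm.sign σ : ℤ) : ℂ) • V.submatrix σ.symm id = V * A) : cubeRep σ = A :=
  V_mul_injective ((V_mul_cubeRep σ).trans h)

lemma cubeRep_cycle : cubeRep c[1, 3, 2] = E := cubeRep_eq_of_V_mul <| by
  have hs : Perm.sign c[(1 : Fin 4), 3, 2] = 1 := by decide
  have happly : ∀ i, c[(1 : Fin 4), 3, 2].symm i = ![0, 2, 3, 1] i := by decide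
  ext i j; fin_cases i <;> fin_cases j <;> simp [hs, happly, V, E, mul_apply, Fin.sum_univ_succ]

lemma cubeRep_swap_mul_swap : cubeRep (swap 0 1 * swap 2 3) = S₁ := cubeRep_eq_of_V_mul <| by
  have hs : Perm.sign (swap (0 : Fin 4) 1 * swap 2 3) = 1 := by decide
  have happly : ∀ i, (swap (0 : Fin 4) 1 * swap 2 3).symm i = ![1, 0, 3, 2] i := by decide
  ext i j; fin_cases i <;> fin_cases j <;> simp [hs, happly, V, S₁, mul_apply, Fin.sum_univ_succ]

lemma cubeRep_swap : cubeRep (swap 2 3) = B := cubeRep_eq_of_V_mul <| by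
  have hs : Perm.sign (swap (2 : Fin 4) 3) = -1 := by decide
  have happly : ∀ i, swap (2 : Fin 4) 3 i = ![0, 1, 3, 2] i := by decide
  ext i j; fin_cases i <;> fin_cases j <;> simp [hs, happly, V, B, mul_apply, Fin.sum_univ_succ]

lemma closure_cycle_swap_mul_swap_swap_eq_top :
    Subgroup.closure {c[1, 3, 2], swap 0 1 * swap 2 3, swap (2 : Fin 4) 3} = ⊤ := by
  set H := Subgroup.closure {c[1, 3, 2], swap 0 1 * swap 2 3, swap (2 : Fin 4) 3}
  have hc : c[1, 3, 2] ∈ H := Subgroup.subset_closure (by simp)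
  have hd : swap 0 1 * swap 2 3 ∈ H := Subgroup.subset_closure (by simp)
  have ht : swap 2 3 ∈ H := Subgroup.subset_closure (by simp)
  have hrot : finRotate 4 = swap 0 1 * swap 2 3 * c[1, 3, 2] * swap 2 3 := by decide
  have hswap : swap 2 (finRotate 4 2) = swap 2 3 := by decide
  rw [eq_top_iff, ← Perm.closure_cycle_adjacent_swap isCycle_finRotate support_finRotate 2, hswap,
    Subgroup.closure_le, Set.insert_subset_iff, Set.singleton_subset_iff, hrot]
  exact ⟨mul_mem (mul_mem hd hc) ht, ht⟩

lemma closure_eq_range_unitaryCubeRep (hE : E ∈ unitaryGroup (Fin 3) ℂ)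
    (hS : S₁ ∈ unitaryGroup (Fin 3) ℂ) (hB : B ∈ unitaryGroup (Fin 3) ℂ) :
    Subgroup.closure {⟨E, hE⟩, ⟨S₁, hS⟩, ⟨B, hB⟩} = unitaryCubeRep.range := by
  rw [MonoidHom.range_eq_map, ← closure_cycle_swap_mul_swap_swap_eq_top, MonoidHom.map_closure,
    Set.image_insert_eq, Set.image_insert_eq, Set.image_singleton]
  congr
  exacts [cubeRep_cycle.symm, cubeRep_swap_mul_swap.symm, cubeRep_swap.symm]

/-- The subgroup of the 3×3 unitary group generated by
`E`, `S₁` and `B` is isomorphic to the symmetric group `S₄`; in particular it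
has exactly `24` elements. -/
theorem stmt9 :
    ∃ (hE : E ∈ Matrix.unitaryGroup (Fin 3) ℂ)
      (hS : S₁ ∈ Matrix.unitaryGroup (Fin 3) ℂ)
      (hB : B ∈ Matrix.unitaryGroup (Fin 3) ℂ),
      Nonempty
        ((Subgroup.closure {⟨E, hE⟩, ⟨S₁, hS⟩, ⟨B, hB⟩} :
            Subgroup (Matrix.unitaryGroup (Fin 3) ℂ)) ≃* Equiv.Perm (Fin 4)) ∧
      Nat.card
        (Subgroup.closure {⟨E, hE⟩, ⟨S₁, hS⟩, ⟨B, hB⟩} :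
          Subgroup (Matrix.unitaryGroup (Fin 3) ℂ)) = 24 := by
  refine ⟨cubeRep_cycle ▸ cubeRep_mem_unitaryGroup _,
    cubeRep_swap_mul_swap ▸ cubeRep_mem_unitaryGroup _,
    cubeRep_swap ▸ cubeRep_mem_unitaryGroup _, ?_⟩
  rw [closure_eq_range_unitaryCubeRep]
  let e := (MonoidHom.ofInjective unitaryCubeRep_injective).symm
  refine ⟨⟨e⟩, ?_⟩
  rw [Nat.card_congr e.toEquiv, Nat.card_perm, Nat.card_eq_fintype_card, Fintype.card_fin]
  rfl
end
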